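/- Let A be an abelian group and x an automorphism of A of finite order q such that [a,_n x] = 1 for all a in A (for some n ≥ 1). Then x fixes every element of the form a^{q^{n-1}} with a in A, i.e., [A^{q^{n-1}}, x] = 1. -/

import Mathlib

/-!
Write `x = 1 + d` in the endomorphism ring of `A` (written additively). Then `d ^ n = 0` and
`(1 + d) ^ q = 1`, and the binomial expansion of the latter shows `q * d ∈ d ^ 2 * R`. Since `q` is
central this iterates to `q ^ j * d ∈ d ^ (j + 1) * R`, so `q ^ (n - 1) * d = 0`, which says
`(a⁻¹ * x a) ^ q ^ (n - 1) = 1` for every `a`.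
-/

/-- Iterated commutator `[a,_n x]` of an element `a` of an abelian group with an
automorphism `x`, where `[a, x] = a⁻¹ * x a`. -/
def autEngel {A : Type*} [CommGroup A] (x : MulAut A) (a : A) : ℕ → A
  | 0 => a
  | n + 1 => (autEngel x a n)⁻¹ * x (autEngel x a n)

open Polynomial

theorem Polynomial.X_sq_dvd_one_add_X_pow_sub_one_sub_natCast_mul_X {R : Type*} [CommRing R]
    (q : ℕ) : (X ^ 2 : R[X]) ∣ (1 + X) ^ q - 1 - (q : R[X]) * X := by
  refine X_pow_dvd_iff.mpr fun k hk => ?_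
  interval_cases k <;> simp [coeff_one_add_X_pow, coeff_one]

section OneAddPowEqOne

variable {R : Type*} [Ring R] {d : R} {q : ℕ}

theorem exists_natCast_mul_eq_sq_mul_of_one_add_pow_eq_one (h : (1 + d) ^ q = 1) :
    ∃ g : R, (q : R) * d = d ^ 2 * g := by
  obtain ⟨p, hp⟩ := X_sq_dvd_one_add_X_pow_sub_one_sub_natCast_mul_X (R := ℤ) q
  refine ⟨-aeval d p, ?_⟩
  have hd := congrArg (aeval d) hp
  simp only [map_sub, map_pow, map_add, map_one, map_mul, map_natCast, aeval_X, h] at hd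
  rw [mul_neg, ← hd]
  abel

theorem exists_natCast_pow_mul_eq_pow_mul_of_one_add_pow_eq_one (h : (1 + d) ^ q = 1) (j : ℕ) :
    ∃ g : R, (q : R) ^ j * d = d ^ (j + 1) * g := by
  obtain ⟨g, hg⟩ := exists_natCast_mul_eq_sq_mul_of_one_add_pow_eq_one h
  induction j with
  | zero => exact ⟨1, by simp⟩
  | succ j ih =>
    obtain ⟨g', hg'⟩ := ih
    refine ⟨g * g', ?_⟩
    calc (q : R) ^ (j + 1) * d = (q : R) * d ^ (j + 1) * g' := by
          rw [pow_succ', mul_assoc, hg', mul_assoc]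
      _ = d ^ j * ((q : R) * d) * g' := by
          rw [pow_succ, ← mul_assoc, (Nat.cast_commute q (d ^ j)).eq, mul_assoc (d ^ j)]
      _ = d ^ (j + 1 + 1) * (g * g') := by
          rw [hg, ← mul_assoc, ← pow_add, mul_assoc]

theorem natCast_pow_pred_mul_eq_zero_of_one_add_pow_eq_one {n : ℕ} (h : (1 + d) ^ q = 1)
    (hd : d ^ n = 0) : (q : R) ^ (n - 1) * d = 0 := by
  obtain ⟨g, hg⟩ := exists_natCast_pow_mul_eq_pow_mul_of_one_add_pow_eq_one h (n - 1)
  rw [hg, pow_eq_zero_of_le (by omega) hd, zero_mul]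

end OneAddPowEqOne

namespace MulAut

variable {A : Type*} [CommGroup A]

variable (A) in
def toAdditiveEnd : MulAut A →* AddMonoid.End (Additive A) where
  toFun x := MonoidHom.toAdditive x.toMonoidHom
  map_one' := rfl
  map_mul' _ _ := rfl

theorem toAdditiveEnd_sub_one_apply (x : MulAut A) (a : A) :
    (toAdditiveEnd A x - 1) (Additive.ofMul a) = Additive.ofMul (a⁻¹ * x a) := by
  rw [ofMul_mul, ofMul_inv, neg_add_eq_sub]
  rfl

theorem autEngel_eq_toMul_sub_one_pow_apply (x : MulAut A) (a : A) (m : ℕ) :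
    autEngel x a m = Additive.toMul (((toAdditiveEnd A x - 1) ^ m) (Additive.ofMul a)) := by
  induction m with
  | zero => rfl
  | succ m ih =>
    rw [autEngel, ih, pow_succ', AddMonoid.End.coe_mul, Function.comp_apply,
      ← ofMul_toMul (((toAdditiveEnd A x - 1) ^ m) _), toAdditiveEnd_sub_one_apply]
    rfl

end MulAut

open MulAut in
theorem stmt5_general {A : Type*} [CommGroup A] (x : MulAut A) (q n : ℕ)
    (hq : orderOf x = q)
    (hengel : ∀ a : A, autEngel x a n = 1) :
    ∀ a : A, x (a ^ q ^ (n - 1)) = a ^ q ^ (n - 1) := by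
  set d := toAdditiveEnd A x - 1
  have hpow : (1 + d) ^ q = 1 := by
    rw [add_sub_cancel, ← map_pow, ← hq, pow_orderOf_eq_one, map_one]
  have hnil : d ^ n = 0 := AddMonoidHom.ext fun c =>
    toMul_eq_one.mp ((autEngel_eq_toMul_sub_one_pow_apply x _ n).symm.trans (hengel c.toMul))
  intro a
  have hfix := DFunLike.congr_fun
    (natCast_pow_pred_mul_eq_zero_of_one_add_pow_eq_one hpow hnil) (Additive.ofMul a)
  rw [AddMonoid.End.coe_mul, Function.comp_apply, toAdditiveEnd_sub_one_apply, ← Nat.cast_pow,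
    AddMonoid.End.natCast_apply, ← ofMul_pow, AddMonoid.End.zero_apply, ofMul_eq_zero, mul_pow,
    inv_pow, inv_mul_eq_one] at hfix
  rw [map_pow, hfix]

/-- Casolo's lemma: if `x` is an automorphism of an abelian group `A` of finite order `q`
with `[a,_n x] = 1` for all `a` (some `n ≥ 1`), then `x` fixes all `q^{n-1}`-th powers. -/
theorem stmt5 {A : Type*} [CommGroup A] (x : MulAut A) (q n : ℕ)
    (hq : orderOf x = q) (hqpos : 0 < q) (hn : 1 ≤ n)
    (hengel : ∀ a : A, autEngel x a n = 1) :
    ∀ a : A, x (a ^ q ^ (n - 1)) = a ^ q ^ (n - 1) :=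
  stmt5_general x q n hq hengel
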